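/- Let G ≤ Perm({0,…,5}) be the subgroup generated by a = (0 1 2), b = (3 4 5), and c = (0 3)(1 4)(2 5). The set of nonidentity elements g ∈ G with ind(g) = 2 is exactly {a, a², b, b²} (the elements of order 3 with exactly three fixed points), and this set is the union of exactly two conjugacy classes of G, namely {a, b} and {a², b²}, which are mapped to one another by the inversion map g ↦ g^{−1}. -/
import Mathlib

set_option maxRecDepth 4000
set_option maxHeartbeats 1000000

/-- The 3-cycle `a = (0 1 2)` on `{0,…,5}`. -/
def cycA : Equiv.Perm (Fin 6) := Equiv.swap 0 2 * Equiv.swap 0 1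

/-- The 3-cycle `b = (3 4 5)` on `{0,…,5}`. -/
def cycB : Equiv.Perm (Fin 6) := Equiv.swap 3 5 * Equiv.swap 3 4

/-- The involution `c = (0 3)(1 4)(2 5)` on `{0,…,5}`. -/
def invC : Equiv.Perm (Fin 6) := Equiv.swap 0 3 * Equiv.swap 1 4 * Equiv.swap 2 5

/-- `G = ⟨a, b, c⟩ ≤ S₆`, a copy of `C₃ ≀ C₂ = (C₃ × C₃) ⋊ C₂`. -/
def G18 : Subgroup (Equiv.Perm (Fin 6)) := Subgroup.closure {cycA, cycB, invC}

/-- `ind(g) = 6 −` the number of orbits of `⟨g⟩` on `{0,…,5}`. -/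
noncomputable def ind6 (g : Equiv.Perm (Fin 6)) : ℕ :=
  6 - Nat.card (MulAction.orbitRel.Quotient (Subgroup.zpowers g) (Fin 6))

/-- The conjugacy class of `g` in the subgroup `G ≤ S₆`, viewed as a set of
permutations. -/
def conjClassIn (G : Subgroup (Equiv.Perm (Fin 6))) (g : Equiv.Perm (Fin 6)) :
    Set (Equiv.Perm (Fin 6)) :=
  {y | ∃ h ∈ G, h * g * h⁻¹ = y}

/-- The orbit of `x` under powers of `g`, as a finset. -/
def orbFin (g : Equiv.Perm (Fin 6)) (x : Fin 6) : Finset (Fin 6) :=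
  (Finset.range 6).image (fun n => (g ^ n) x)

lemma mem_orbFin_iff {g : Equiv.Perm (Fin 6)} (h : g ^ 6 = 1) {x z : Fin 6} :
    z ∈ orbFin g x ↔ z ∈ MulAction.orbit (Subgroup.zpowers g) x := by
  constructor
  · rintro hz
    simp only [orbFin, Finset.mem_image, Finset.mem_range] at hz
    obtain ⟨n, -, rfl⟩ := hz
    exact ⟨⟨g ^ n, ⟨(n : ℤ), by simp⟩⟩, rfl⟩
  · rintro ⟨⟨u, k, rfl⟩, rfl⟩
    simp only [orbFin, Finset.mem_image, Finset.mem_range]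
    refine ⟨(k % 6).toNat, ?_, ?_⟩
    · have h2 : k % 6 < 6 := Int.emod_lt_of_pos k (by norm_num)
      omega
    · have hk : g ^ k = g ^ ((k % 6).toNat) := by
        conv_lhs => rw [← Int.mul_ediv_add_emod k 6]
        rw [zpow_add, zpow_mul]
        rw [show (6:ℤ) = (6:ℕ) by norm_num, zpow_natCast, h, one_zpow, one_mul,
          ← zpow_natCast, Int.toNat_of_nonneg (Int.emod_nonneg k (by norm_num))]
      simp only [← hk]
      rfl

lemma card_orbits {g : Equiv.Perm (Fin 6)} (h : g ^ 6 = 1) :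
    Nat.card (MulAction.orbitRel.Quotient (Subgroup.zpowers g) (Fin 6)) =
      (Finset.univ.image (orbFin g)).card := by
  have inv : ∀ x y : Fin 6, MulAction.orbitRel (Subgroup.zpowers g) (Fin 6) x y →
      orbFin g x = orbFin g y := by
    intro x y hxy
    rw [MulAction.orbitRel_apply] at hxy
    ext z
    rw [mem_orbFin_iff h, mem_orbFin_iff h, MulAction.orbit_eq_iff.2 hxy]
  let f : MulAction.orbitRel.Quotient (Subgroup.zpowers g) (Fin 6) →
      {s // s ∈ Finset.univ.image (orbFin g)} :=
    Quotient.lift (fun x => ⟨orbFin g x, Finset.mem_image_of_mem _ (Finset.mem_univ x)⟩)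
      (fun x y hxy => Subtype.ext (inv x y hxy))
  have hbij : Function.Bijective f := by
    constructor
    · rintro ⟨x⟩ ⟨y⟩ hxy
      apply Quotient.sound
      have hx : orbFin g x = orbFin g y := congrArg Subtype.val hxy
      have : x ∈ orbFin g y := by
        rw [← hx, mem_orbFin_iff h]
        exact MulAction.mem_orbit_self x
      rw [mem_orbFin_iff h] at this
      exact (MulAction.orbitRel_apply).mpr this
    · rintro ⟨s, hs⟩
      simp only [Finset.mem_image, Finset.mem_univ, true_and] at hs
      obtain ⟨x, rfl⟩ := hs
      exact ⟨Quotient.mk _ x, rfl⟩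
  rw [Nat.card_congr (Equiv.ofBijective f hbij), Nat.card_eq_fintype_card, Fintype.card_coe]

lemma ind6_eq_of {g : Equiv.Perm (Fin 6)} (h6 : g ^ 6 = 1) :
    ind6 g = 6 - (Finset.univ.image (orbFin g)).card := by
  unfold ind6
  rw [card_orbits h6]

def pE000 : Equiv.Perm (Fin 6) :=
  ⟨![0,1,2,3,4,5], ![0,1,2,3,4,5], by decide, by decide⟩
def pE001 : Equiv.Perm (Fin 6) :=
  ⟨![3,4,5,0,1,2], ![3,4,5,0,1,2], by decide, by decide⟩
def pE010 : Equiv.Perm (Fin 6) :=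
  ⟨![0,1,2,4,5,3], ![0,1,2,5,3,4], by decide, by decide⟩
def pE011 : Equiv.Perm (Fin 6) :=
  ⟨![4,5,3,0,1,2], ![3,4,5,2,0,1], by decide, by decide⟩
def pE020 : Equiv.Perm (Fin 6) :=
  ⟨![0,1,2,5,3,4], ![0,1,2,4,5,3], by decide, by decide⟩
def pE021 : Equiv.Perm (Fin 6) :=
  ⟨![5,3,4,0,1,2], ![3,4,5,1,2,0], by decide, by decide⟩
def pE100 : Equiv.Perm (Fin 6) :=
  ⟨![1,2,0,3,4,5], ![2,0,1,3,4,5], by decide, by decide⟩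
def pE101 : Equiv.Perm (Fin 6) :=
  ⟨![3,4,5,1,2,0], ![5,3,4,0,1,2], by decide, by decide⟩
def pE110 : Equiv.Perm (Fin 6) :=
  ⟨![1,2,0,4,5,3], ![2,0,1,5,3,4], by decide, by decide⟩
def pE111 : Equiv.Perm (Fin 6) :=
  ⟨![4,5,3,1,2,0], ![5,3,4,2,0,1], by decide, by decide⟩
def pE120 : Equiv.Perm (Fin 6) :=
  ⟨![1,2,0,5,3,4], ![2,0,1,4,5,3], by decide, by decide⟩
def pE121 : Equiv.Perm (Fin 6) :=
  ⟨![5,3,4,1,2,0], ![5,3,4,1,2,0], by decide, by decide⟩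
def pE200 : Equiv.Perm (Fin 6) :=
  ⟨![2,0,1,3,4,5], ![1,2,0,3,4,5], by decide, by decide⟩
def pE201 : Equiv.Perm (Fin 6) :=
  ⟨![3,4,5,2,0,1], ![4,5,3,0,1,2], by decide, by decide⟩
def pE210 : Equiv.Perm (Fin 6) :=
  ⟨![2,0,1,4,5,3], ![1,2,0,5,3,4], by decide, by decide⟩
def pE211 : Equiv.Perm (Fin 6) :=
  ⟨![4,5,3,2,0,1], ![4,5,3,2,0,1], by decide, by decide⟩
def pE220 : Equiv.Perm (Fin 6) :=
  ⟨![2,0,1,5,3,4], ![1,2,0,4,5,3], by decide, by decide⟩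
def pE221 : Equiv.Perm (Fin 6) :=
  ⟨![5,3,4,2,0,1], ![4,5,3,1,2,0], by decide, by decide⟩

abbrev D18 (g : Equiv.Perm (Fin 6)) : Prop :=
  g = pE000 ∨ g = pE001 ∨ g = pE010 ∨ g = pE011 ∨ g = pE020 ∨ g = pE021 ∨ g = pE100 ∨ g = pE101 ∨ g = pE110 ∨ g = pE111 ∨ g = pE120 ∨ g = pE121 ∨ g = pE200 ∨ g = pE201 ∨ g = pE210 ∨ g = pE211 ∨ g = pE220 ∨ g = pE221

lemma hBA : cycB * cycA = cycA * cycB := by decide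
lemma commBA : Commute cycB cycA := hBA
lemma sCA : SemiconjBy invC cycA cycB := (by decide : invC * cycA = cycB * invC)
lemma sCB : SemiconjBy invC cycB cycA := (by decide : invC * cycB = cycA * invC)
lemma hA3 : cycA ^ 3 = 1 := by decide
lemma hB3 : cycB ^ 3 = 1 := by decide
lemma hCC : invC * invC = 1 := by decide
lemma hAinv : cycA⁻¹ = cycA * cycA := by decide
lemma hBinv : cycB⁻¹ = cycB * cycB := by decide
lemma hCinv : invC⁻¹ = invC := by decide

/-- Normal form predicate. -/
def NF (x : Equiv.Perm (Fin 6)) : Prop :=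
  ∃ i j : ℕ, x = cycA ^ i * cycB ^ j ∨ x = cycA ^ i * cycB ^ j * invC

lemma coreA (i j : ℕ) : cycA * (cycA ^ i * cycB ^ j) = cycA ^ (i + 1) * cycB ^ j := by
  rw [← mul_assoc, ← pow_succ']

lemma coreB (i j : ℕ) : cycB * (cycA ^ i * cycB ^ j) = cycA ^ i * cycB ^ (j + 1) := by
  rw [← mul_assoc, (commBA.pow_right i).eq, mul_assoc, ← pow_succ']

lemma coreC (i j : ℕ) : invC * (cycA ^ i * cycB ^ j) = cycA ^ j * cycB ^ i * invC := by
  calc invC * (cycA ^ i * cycB ^ j) = invC * cycA ^ i * cycB ^ j := (mul_assoc _ _ _).symm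
    _ = cycB ^ i * invC * cycB ^ j := by rw [(sCA.pow_right i).eq]
    _ = cycB ^ i * (invC * cycB ^ j) := mul_assoc _ _ _
    _ = cycB ^ i * (cycA ^ j * invC) := by rw [(sCB.pow_right j).eq]
    _ = cycB ^ i * cycA ^ j * invC := (mul_assoc _ _ _).symm
    _ = cycA ^ j * cycB ^ i * invC := by rw [(commBA.pow_pow i j).eq]

lemma stepA {y : Equiv.Perm (Fin 6)} (hy : NF y) : NF (cycA * y) := by
  obtain ⟨i, j, rfl | rfl⟩ := hy
  · exact ⟨i + 1, j, Or.inl (coreA i j)⟩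
  · exact ⟨i + 1, j, Or.inr (by rw [← mul_assoc, coreA i j])⟩

lemma stepB {y : Equiv.Perm (Fin 6)} (hy : NF y) : NF (cycB * y) := by
  obtain ⟨i, j, rfl | rfl⟩ := hy
  · exact ⟨i, j + 1, Or.inl (coreB i j)⟩
  · exact ⟨i, j + 1, Or.inr (by rw [← mul_assoc, coreB i j])⟩

lemma stepC {y : Equiv.Perm (Fin 6)} (hy : NF y) : NF (invC * y) := by
  obtain ⟨i, j, rfl | rfl⟩ := hy
  · exact ⟨j, i, Or.inr (coreC i j)⟩
  · exact ⟨j, i, Or.inl (by rw [← mul_assoc, coreC i j, mul_assoc, hCC, mul_one])⟩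

lemma G18_NF {g : Equiv.Perm (Fin 6)} (hg : g ∈ G18) : NF g := by
  have hg' : g ∈ Subgroup.closure {cycA, cycB, invC} := hg
  clear hg
  induction hg' using Subgroup.closure_induction_left with
  | one => exact ⟨0, 0, Or.inl (by rw [pow_zero, pow_zero, one_mul])⟩
  | mul_left x hx y hy ih =>
    simp only [Set.mem_insert_iff, Set.mem_singleton_iff] at hx
    rcases hx with rfl | rfl | rfl
    · exact stepA ih
    · exact stepB ih
    · exact stepC ih
  | inv_mul_cancel x hx y hy ih =>
    simp only [Set.mem_insert_iff, Set.mem_singleton_iff] at hx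
    rcases hx with rfl | rfl | rfl
    · rw [hAinv, mul_assoc]; exact stepA (stepA ih)
    · rw [hBinv, mul_assoc]; exact stepB (stepB ih)
    · rw [hCinv]; exact stepC ih

lemma powA_mod (i : ℕ) : cycA ^ i = cycA ^ (i % 3) := by
  conv_lhs => rw [← Nat.div_add_mod i 3]
  rw [pow_add, pow_mul, hA3, one_pow, one_mul]

lemma powB_mod (j : ℕ) : cycB ^ j = cycB ^ (j % 3) := by
  conv_lhs => rw [← Nat.div_add_mod j 3]
  rw [pow_add, pow_mul, hB3, one_pow, one_mul]

lemma d000 : D18 (cycA ^ 0 * cycB ^ 0) := Or.inl (by decide : cycA ^ 0 * cycB ^ 0 = pE000)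
lemma d001 : D18 (cycA ^ 0 * cycB ^ 0 * invC) := Or.inr (Or.inl (by decide : cycA ^ 0 * cycB ^ 0 * invC = pE001))
lemma d010 : D18 (cycA ^ 0 * cycB ^ 1) := Or.inr (Or.inr (Or.inl (by decide : cycA ^ 0 * cycB ^ 1 = pE010)))
lemma d011 : D18 (cycA ^ 0 * cycB ^ 1 * invC) := Or.inr (Or.inr (Or.inr (Or.inl (by decide : cycA ^ 0 * cycB ^ 1 * invC = pE011))))
lemma d020 : D18 (cycA ^ 0 * cycB ^ 2) := Or.inr (Or.inr (Or.inr (Or.inr (Or.inl (by decide : cycA ^ 0 * cycB ^ 2 = pE020)))))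
lemma d021 : D18 (cycA ^ 0 * cycB ^ 2 * invC) := Or.inr (Or.inr (Or.inr (Or.inr (Or.inr (Or.inl (by decide : cycA ^ 0 * cycB ^ 2 * invC = pE021))))))
lemma d100 : D18 (cycA ^ 1 * cycB ^ 0) := Or.inr (Or.inr (Or.inr (Or.inr (Or.inr (Or.inr (Or.inl (by decide : cycA ^ 1 * cycB ^ 0 = pE100)))))))
lemma d101 : D18 (cycA ^ 1 * cycB ^ 0 * invC) := Or.inr (Or.inr (Or.inr (Or.inr (Or.inr (Or.inr (Or.inr (Or.inl (by decide : cycA ^ 1 * cycB ^ 0 * invC = pE101))))))))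
lemma d110 : D18 (cycA ^ 1 * cycB ^ 1) := Or.inr (Or.inr (Or.inr (Or.inr (Or.inr (Or.inr (Or.inr (Or.inr (Or.inl (by decide : cycA ^ 1 * cycB ^ 1 = pE110)))))))))
lemma d111 : D18 (cycA ^ 1 * cycB ^ 1 * invC) := Or.inr (Or.inr (Or.inr (Or.inr (Or.inr (Or.inr (Or.inr (Or.inr (Or.inr (Or.inl (by decide : cycA ^ 1 * cycB ^ 1 * invC = pE111))))))))))
lemma d120 : D18 (cycA ^ 1 * cycB ^ 2) := Or.inr (Or.inr (Or.inr (Or.inr (Or.inr (Or.inr (Or.inr (Or.inr (Or.inr (Or.inr (Or.inl (by decide : cycA ^ 1 * cycB ^ 2 = pE120)))))))))))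
lemma d121 : D18 (cycA ^ 1 * cycB ^ 2 * invC) := Or.inr (Or.inr (Or.inr (Or.inr (Or.inr (Or.inr (Or.inr (Or.inr (Or.inr (Or.inr (Or.inr (Or.inl (by decide : cycA ^ 1 * cycB ^ 2 * invC = pE121))))))))))))
lemma d200 : D18 (cycA ^ 2 * cycB ^ 0) := Or.inr (Or.inr (Or.inr (Or.inr (Or.inr (Or.inr (Or.inr (Or.inr (Or.inr (Or.inr (Or.inr (Or.inr (Or.inl (by decide : cycA ^ 2 * cycB ^ 0 = pE200)))))))))))))
lemma d201 : D18 (cycA ^ 2 * cycB ^ 0 * invC) := Or.inr (Or.inr (Or.inr (Or.inr (Or.inr (Or.inr (Or.inr (Or.inr (Or.inr (Or.inr (Or.inr (Or.inr (Or.inr (Or.inl (by decide : cycA ^ 2 * cycB ^ 0 * invC = pE201))))))))))))))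
lemma d210 : D18 (cycA ^ 2 * cycB ^ 1) := Or.inr (Or.inr (Or.inr (Or.inr (Or.inr (Or.inr (Or.inr (Or.inr (Or.inr (Or.inr (Or.inr (Or.inr (Or.inr (Or.inr (Or.inl (by decide : cycA ^ 2 * cycB ^ 1 = pE210)))))))))))))))
lemma d211 : D18 (cycA ^ 2 * cycB ^ 1 * invC) := Or.inr (Or.inr (Or.inr (Or.inr (Or.inr (Or.inr (Or.inr (Or.inr (Or.inr (Or.inr (Or.inr (Or.inr (Or.inr (Or.inr (Or.inr (Or.inl (by decide : cycA ^ 2 * cycB ^ 1 * invC = pE211))))))))))))))))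
lemma d220 : D18 (cycA ^ 2 * cycB ^ 2) := Or.inr (Or.inr (Or.inr (Or.inr (Or.inr (Or.inr (Or.inr (Or.inr (Or.inr (Or.inr (Or.inr (Or.inr (Or.inr (Or.inr (Or.inr (Or.inr (Or.inl (by decide : cycA ^ 2 * cycB ^ 2 = pE220)))))))))))))))))
lemma d221 : D18 (cycA ^ 2 * cycB ^ 2 * invC) := Or.inr (Or.inr (Or.inr (Or.inr (Or.inr (Or.inr (Or.inr (Or.inr (Or.inr (Or.inr (Or.inr (Or.inr (Or.inr (Or.inr (Or.inr (Or.inr (Or.inr (by decide : cycA ^ 2 * cycB ^ 2 * invC = pE221)))))))))))))))))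

lemma NF_D18 {g : Equiv.Perm (Fin 6)} (h : NF g) : D18 g := by
  obtain ⟨i, j, rfl | rfl⟩ := h
  · rw [powA_mod i, powB_mod j]
    have hi : i % 3 = 0 ∨ i % 3 = 1 ∨ i % 3 = 2 := by omega
    have hj : j % 3 = 0 ∨ j % 3 = 1 ∨ j % 3 = 2 := by omega
    rcases hi with hi | hi | hi <;> rcases hj with hj | hj | hj <;> rw [hi, hj]
    · exact d000
    · exact d010
    · exact d020
    · exact d100
    · exact d110
    · exact d120
    · exact d200
    · exact d210
    · exact d220
  · rw [powA_mod i, powB_mod j]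
    have hi : i % 3 = 0 ∨ i % 3 = 1 ∨ i % 3 = 2 := by omega
    have hj : j % 3 = 0 ∨ j % 3 = 1 ∨ j % 3 = 2 := by omega
    rcases hi with hi | hi | hi <;> rcases hj with hj | hj | hj <;> rw [hi, hj]
    · exact d001
    · exact d011
    · exact d021
    · exact d101
    · exact d111
    · exact d121
    · exact d201
    · exact d211
    · exact d221

lemma memA : cycA ∈ G18 := Subgroup.subset_closure (by simp)
lemma memB : cycB ∈ G18 := Subgroup.subset_closure (by simp)
lemma memC : invC ∈ G18 := Subgroup.subset_closure (by simp)

/-- In `G = ⟨(0 1 2), (3 4 5), (0 3)(1 4)(2 5)⟩ ≅ C₃ ≀ C₂` the nonidentity elements of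
minimal index `2` are exactly `{a, a², b, b²}`; this set is the union of exactly the two
conjugacy classes `{a, b}` and `{a², b²}` of `G`, which are interchanged by
`g ↦ g⁻¹`. -/
theorem G18_minimal_index_elements :
    {g : Equiv.Perm (Fin 6) | g ∈ G18 ∧ g ≠ 1 ∧ ind6 g = 2} =
      {cycA, cycA ^ 2, cycB, cycB ^ 2} ∧
    conjClassIn G18 cycA = {cycA, cycB} ∧
    conjClassIn G18 (cycA ^ 2) = {cycA ^ 2, cycB ^ 2} ∧
    ({cycA, cycA ^ 2, cycB, cycB ^ 2} : Set (Equiv.Perm (Fin 6))) =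
      {cycA, cycB} ∪ {cycA ^ 2, cycB ^ 2} ∧
    (fun g : Equiv.Perm (Fin 6) => g⁻¹) '' {cycA, cycB} = {cycA ^ 2, cycB ^ 2} ∧
    (fun g : Equiv.Perm (Fin 6) => g⁻¹) '' {cycA ^ 2, cycB ^ 2} = {cycA, cycB} := by
  refine ⟨?_, ?_, ?_, ?_, ?_, ?_⟩
  · ext g
    simp only [Set.mem_setOf_eq]
    constructor
    · rintro ⟨hG, hne, hind⟩
      rcases NF_D18 (G18_NF hG) with rfl | rfl | rfl | rfl | rfl | rfl | rfl | rfl | rfl | rfl | rfl | rfl | rfl | rfl | rfl | rfl | rfl | rfl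
      · exact absurd (by decide : pE000 = 1) hne
      · rw [ind6_eq_of (by decide : pE001 ^ 6 = 1),
          show (Finset.univ.image (orbFin pE001)).card = 3 from by decide] at hind
        omega
      · simp only [Set.mem_insert_iff, Set.mem_singleton_iff]
        exact Or.inr (Or.inr (Or.inl (by decide)))
      · rw [ind6_eq_of (by decide : pE011 ^ 6 = 1),
          show (Finset.univ.image (orbFin pE011)).card = 1 from by decide] at hind
        omega
      · simp only [Set.mem_insert_iff, Set.mem_singleton_iff]
        exact Or.inr (Or.inr (Or.inr (by decide)))
      · rw [ind6_eq_of (by decide : pE021 ^ 6 = 1),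
          show (Finset.univ.image (orbFin pE021)).card = 1 from by decide] at hind
        omega
      · simp only [Set.mem_insert_iff, Set.mem_singleton_iff]
        exact Or.inl (by decide)
      · rw [ind6_eq_of (by decide : pE101 ^ 6 = 1),
          show (Finset.univ.image (orbFin pE101)).card = 1 from by decide] at hind
        omega
      · rw [ind6_eq_of (by decide : pE110 ^ 6 = 1),
          show (Finset.univ.image (orbFin pE110)).card = 2 from by decide] at hind
        omega
      · rw [ind6_eq_of (by decide : pE111 ^ 6 = 1),
          show (Finset.univ.image (orbFin pE111)).card = 1 from by decide] at hind
        omega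
      · rw [ind6_eq_of (by decide : pE120 ^ 6 = 1),
          show (Finset.univ.image (orbFin pE120)).card = 2 from by decide] at hind
        omega
      · rw [ind6_eq_of (by decide : pE121 ^ 6 = 1),
          show (Finset.univ.image (orbFin pE121)).card = 3 from by decide] at hind
        omega
      · simp only [Set.mem_insert_iff, Set.mem_singleton_iff]
        exact Or.inr (Or.inl (by decide))
      · rw [ind6_eq_of (by decide : pE201 ^ 6 = 1),
          show (Finset.univ.image (orbFin pE201)).card = 1 from by decide] at hind
        omega
      · rw [ind6_eq_of (by decide : pE210 ^ 6 = 1),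
          show (Finset.univ.image (orbFin pE210)).card = 2 from by decide] at hind
        omega
      · rw [ind6_eq_of (by decide : pE211 ^ 6 = 1),
          show (Finset.univ.image (orbFin pE211)).card = 3 from by decide] at hind
        omega
      · rw [ind6_eq_of (by decide : pE220 ^ 6 = 1),
          show (Finset.univ.image (orbFin pE220)).card = 2 from by decide] at hind
        omega
      · rw [ind6_eq_of (by decide : pE221 ^ 6 = 1),
          show (Finset.univ.image (orbFin pE221)).card = 1 from by decide] at hind
        omega
    · intro hg
      simp only [Set.mem_insert_iff, Set.mem_singleton_iff] at hg
      rcases hg with rfl | rfl | rfl | rfl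
      · exact ⟨memA, by decide, by
          rw [ind6_eq_of (by decide : cycA ^ 6 = 1),
            show (Finset.univ.image (orbFin cycA)).card = 4 from by decide]⟩
      · exact ⟨pow_mem memA 2, by decide, by
          rw [ind6_eq_of (by decide : (cycA ^ 2) ^ 6 = 1),
            show (Finset.univ.image (orbFin (cycA ^ 2))).card = 4 from by decide]⟩
      · exact ⟨memB, by decide, by
          rw [ind6_eq_of (by decide : cycB ^ 6 = 1),
            show (Finset.univ.image (orbFin cycB)).card = 4 from by decide]⟩
      · exact ⟨pow_mem memB 2, by decide, by
          rw [ind6_eq_of (by decide : (cycB ^ 2) ^ 6 = 1),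
            show (Finset.univ.image (orbFin (cycB ^ 2))).card = 4 from by decide]⟩
  · ext y
    constructor
    · rintro ⟨h, hG, rfl⟩
      rcases NF_D18 (G18_NF hG) with rfl | rfl | rfl | rfl | rfl | rfl | rfl | rfl | rfl | rfl | rfl | rfl | rfl | rfl | rfl | rfl | rfl | rfl
      · simp only [Set.mem_insert_iff, Set.mem_singleton_iff]
        exact Or.inl (by decide)
      · simp only [Set.mem_insert_iff, Set.mem_singleton_iff]
        exact Or.inr (by decide)
      · simp only [Set.mem_insert_iff, Set.mem_singleton_iff]
        exact Or.inl (by decide)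
      · simp only [Set.mem_insert_iff, Set.mem_singleton_iff]
        exact Or.inr (by decide)
      · simp only [Set.mem_insert_iff, Set.mem_singleton_iff]
        exact Or.inl (by decide)
      · simp only [Set.mem_insert_iff, Set.mem_singleton_iff]
        exact Or.inr (by decide)
      · simp only [Set.mem_insert_iff, Set.mem_singleton_iff]
        exact Or.inl (by decide)
      · simp only [Set.mem_insert_iff, Set.mem_singleton_iff]
        exact Or.inr (by decide)
      · simp only [Set.mem_insert_iff, Set.mem_singleton_iff]
        exact Or.inl (by decide)
      · simp only [Set.mem_insert_iff, Set.mem_singleton_iff]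
        exact Or.inr (by decide)
      · simp only [Set.mem_insert_iff, Set.mem_singleton_iff]
        exact Or.inl (by decide)
      · simp only [Set.mem_insert_iff, Set.mem_singleton_iff]
        exact Or.inr (by decide)
      · simp only [Set.mem_insert_iff, Set.mem_singleton_iff]
        exact Or.inl (by decide)
      · simp only [Set.mem_insert_iff, Set.mem_singleton_iff]
        exact Or.inr (by decide)
      · simp only [Set.mem_insert_iff, Set.mem_singleton_iff]
        exact Or.inl (by decide)
      · simp only [Set.mem_insert_iff, Set.mem_singleton_iff]
        exact Or.inr (by decide)
      · simp only [Set.mem_insert_iff, Set.mem_singleton_iff]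
        exact Or.inl (by decide)
      · simp only [Set.mem_insert_iff, Set.mem_singleton_iff]
        exact Or.inr (by decide)
    · rintro (rfl | rfl)
      · exact ⟨1, one_mem _, by rw [one_mul, inv_one, mul_one]⟩
      · exact ⟨invC, memC, by decide⟩
  · ext y
    constructor
    · rintro ⟨h, hG, rfl⟩
      rcases NF_D18 (G18_NF hG) with rfl | rfl | rfl | rfl | rfl | rfl | rfl | rfl | rfl | rfl | rfl | rfl | rfl | rfl | rfl | rfl | rfl | rfl
      · simp only [Set.mem_insert_iff, Set.mem_singleton_iff]
        exact Or.inl (by decide)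
      · simp only [Set.mem_insert_iff, Set.mem_singleton_iff]
        exact Or.inr (by decide)
      · simp only [Set.mem_insert_iff, Set.mem_singleton_iff]
        exact Or.inl (by decide)
      · simp only [Set.mem_insert_iff, Set.mem_singleton_iff]
        exact Or.inr (by decide)
      · simp only [Set.mem_insert_iff, Set.mem_singleton_iff]
        exact Or.inl (by decide)
      · simp only [Set.mem_insert_iff, Set.mem_singleton_iff]
        exact Or.inr (by decide)
      · simp only [Set.mem_insert_iff, Set.mem_singleton_iff]
        exact Or.inl (by decide)
      · simp only [Set.mem_insert_iff, Set.mem_singleton_iff]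
        exact Or.inr (by decide)
      · simp only [Set.mem_insert_iff, Set.mem_singleton_iff]
        exact Or.inl (by decide)
      · simp only [Set.mem_insert_iff, Set.mem_singleton_iff]
        exact Or.inr (by decide)
      · simp only [Set.mem_insert_iff, Set.mem_singleton_iff]
        exact Or.inl (by decide)
      · simp only [Set.mem_insert_iff, Set.mem_singleton_iff]
        exact Or.inr (by decide)
      · simp only [Set.mem_insert_iff, Set.mem_singleton_iff]
        exact Or.inl (by decide)
      · simp only [Set.mem_insert_iff, Set.mem_singleton_iff]
        exact Or.inr (by decide)
      · simp only [Set.mem_insert_iff, Set.mem_singleton_iff]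
        exact Or.inl (by decide)
      · simp only [Set.mem_insert_iff, Set.mem_singleton_iff]
        exact Or.inr (by decide)
      · simp only [Set.mem_insert_iff, Set.mem_singleton_iff]
        exact Or.inl (by decide)
      · simp only [Set.mem_insert_iff, Set.mem_singleton_iff]
        exact Or.inr (by decide)
    · rintro (rfl | rfl)
      · exact ⟨1, one_mem _, by rw [one_mul, inv_one, mul_one]⟩
      · exact ⟨invC, memC, by decide⟩
  · ext x
    simp only [Set.mem_insert_iff, Set.mem_singleton_iff, Set.mem_union]
    tauto
  · simp only [Set.image_insert_eq, Set.image_singleton]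
    rw [show cycA⁻¹ = cycA ^ 2 from by decide, show cycB⁻¹ = cycB ^ 2 from by decide]
  · simp only [Set.image_insert_eq, Set.image_singleton]
    rw [show (cycA ^ 2)⁻¹ = cycA from by decide, show (cycB ^ 2)⁻¹ = cycB from by decide]
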